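/- Let A₁, …, A_m be pairwise commuting positive definite n×n complex matrices and let w₁, …, w_m be positive reals with Σ_j w_j = 1. Then the unique positive definite matrix minimizing X ↦ Σ_{j=1}^m w_j Tr(A_j(log A_j − log X) + X − A_j) over positive definite matrices commuting with all A_j is the weighted arithmetic mean X = Σ_{j=1}^m w_j A_j. -/

import Mathlib

/-!
Expanding `P = ∑ pᵢ uᵢuᵢᴴ` and `Q = ∑ qⱼ vⱼvⱼᴴ` in eigenbases, the relative entropy becomes
`D(P‖Q) = ∑ᵢⱼ |⟨uᵢ, vⱼ⟩|² qⱼ klFun (pᵢ / qⱼ)` with `klFun x = x log x + 1 - x ≥ 0`, vanishing only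
at `x = 1`. This is Klein's inequality `D(P‖Q) ≥ 0`, with equality only for `P = Q`. Since
`Tr(A log X)` is linear in `A`, for weights summing to one and `Ā = ∑ wⱼ Aⱼ` we have
`∑ wⱼ D(Aⱼ‖X) = ∑ wⱼ D(Aⱼ‖Ā) + D(Ā‖X)`, so the weighted sum is minimised exactly at `X = Ā`, which
is positive definite and commutes with every `Aⱼ`.
-/

open Matrix
open scoped ComplexOrder

/-- The logarithm of a positive definite matrix, via the functional calculus. -/
noncomputable def matLog {n : ℕ} (A : Matrix (Fin n) (Fin n) ℂ) : Matrix (Fin n) (Fin n) ℂ :=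
  cfc Real.log A

namespace InformationTheory

lemma mul_klFun_div_nonneg {a b : ℝ} (ha : 0 ≤ a) (hb : 0 < b) : 0 ≤ b * klFun (a / b) :=
  mul_nonneg hb.le (klFun_nonneg (div_nonneg ha hb.le))

lemma mul_klFun_div_eq_zero_iff {a b : ℝ} (ha : 0 ≤ a) (hb : 0 < b) :
    b * klFun (a / b) = 0 ↔ a = b := by
  rw [mul_eq_zero, klFun_eq_zero_iff (div_nonneg ha hb.le), div_eq_one_iff_eq hb.ne',
    or_iff_right hb.ne']

lemma mul_log_sub_mul_log_add_sub_eq_mul_klFun {a b : ℝ} (ha : 0 < a) (hb : 0 < b) :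
    a * Real.log a - a * Real.log b + b - a = b * klFun (a / b) := by
  rw [klFun_apply, Real.log_div ha.ne' hb.ne']
  field_simp

end InformationTheory

namespace Matrix

variable {n 𝕜 : Type*} [RCLike 𝕜] [Fintype n] [DecidableEq n]

lemma trace_diagonal_mul_diagonal_mul_star (M : Matrix n n 𝕜) (d e : n → ℝ) :
    (diagonal (RCLike.ofReal ∘ d) * M * diagonal (RCLike.ofReal ∘ e) * star M).trace =
      ∑ i, ∑ j, ((d i * e j * ‖M i j‖ ^ 2 : ℝ) : 𝕜) := by
  refine Finset.sum_congr rfl fun i _ => ?_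
  rw [diag_apply, mul_apply]
  refine Finset.sum_congr rfl fun j _ => ?_
  rw [mul_diagonal, diagonal_mul, star_apply, RCLike.star_def, RCLike.ofReal_mul,
    RCLike.ofReal_mul, RCLike.ofReal_pow, ← RCLike.mul_conj]
  simp only [Function.comp_apply]
  ring

lemma IsHermitian.trace_cfc_mul_cfc {P Q : Matrix n n 𝕜} (hP : P.IsHermitian)
    (hQ : Q.IsHermitian) (f g : ℝ → ℝ) :
    (cfc f P * cfc g Q).trace = ∑ i, ∑ j,
      ((f (hP.eigenvalues i) * g (hQ.eigenvalues j) *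
        ‖(star (hP.eigenvectorUnitary : Matrix n n 𝕜) * hQ.eigenvectorUnitary) i j‖ ^ 2 : ℝ) :
          𝕜) := by
  rw [hP.cfc_eq, hQ.cfc_eq, IsHermitian.cfc, IsHermitian.cfc, Unitary.conjStarAlgAut_apply,
    Unitary.conjStarAlgAut_apply, ← trace_diagonal_mul_diagonal_mul_star, star_mul, star_star]
  simp only [Matrix.mul_assoc]
  exact (trace_mul_comm _ _).trans (by simp only [Matrix.mul_assoc]; rfl)

lemma IsHermitian.eq_of_eigenvalues_eq_of_overlap_ne_zero {P Q : Matrix n n 𝕜}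
    (hP : P.IsHermitian) (hQ : Q.IsHermitian)
    (h : ∀ i j, (star (hP.eigenvectorUnitary : Matrix n n 𝕜) * hQ.eigenvectorUnitary) i j ≠ 0 →
      hP.eigenvalues i = hQ.eigenvalues j) :
    P = Q := by
  set U := (hP.eigenvectorUnitary : Matrix n n 𝕜)
  set V := (hQ.eigenvectorUnitary : Matrix n n 𝕜)
  set Dp := diagonal (RCLike.ofReal ∘ hP.eigenvalues : n → 𝕜)
  set Dq := diagonal (RCLike.ofReal ∘ hQ.eigenvalues : n → 𝕜)
  have hUU : U * star U = 1 := Unitary.mul_star_self_of_mem hP.eigenvectorUnitary.2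
  have hVV : V * star V = 1 := Unitary.mul_star_self_of_mem hQ.eigenvectorUnitary.2
  have hVV' : star V * V = 1 := Unitary.star_mul_self_of_mem hQ.eigenvectorUnitary.2
  have hUUV : U * (star U * V) = V := by rw [← Matrix.mul_assoc, hUU, Matrix.one_mul]
  have hintertwine : Dp * (star U * V) = star U * V * Dq := by
    ext i j
    rw [diagonal_mul, mul_diagonal]
    by_cases hij : (star U * V) i j = 0
    · rw [hij, mul_zero, zero_mul]
    · rw [Function.comp_apply, Function.comp_apply, h i j hij, mul_comm]
  have hP_eq : P = U * Dp * star U := hP.spectral_theorem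
  have hQ_eq : Q = V * Dq * star V := hQ.spectral_theorem
  have hPV : P * V = Q * V :=
    calc P * V = U * Dp * star U * V := by rw [← hP_eq]
      _ = U * (Dp * (star U * V)) := by simp only [Matrix.mul_assoc]
      _ = V * Dq := by rw [hintertwine, ← Matrix.mul_assoc, hUUV]
      _ = V * Dq * star V * V := by rw [Matrix.mul_assoc _ (star V), hVV', Matrix.mul_one]
      _ = Q * V := by rw [← hQ_eq]
  simpa [Matrix.mul_assoc, hVV] using congrArg (· * star V) hPV

end Matrix

noncomputable def relEntropy {n : ℕ} (P Q : Matrix (Fin n) (Fin n) ℂ) : ℝ :=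
  ((P * (matLog P - matLog Q) + Q - P).trace).re

lemma relEntropy_self {n : ℕ} (P : Matrix (Fin n) (Fin n) ℂ) : relEntropy P P = 0 := by
  simp [relEntropy]

lemma relEntropy_sub_relEntropy {n : ℕ} (P X Y : Matrix (Fin n) (Fin n) ℂ) :
    relEntropy P X - relEntropy P Y =
      ((P * (matLog Y - matLog X)).trace).re + X.trace.re - Y.trace.re := by
  simp only [relEntropy, mul_sub, trace_add, trace_sub, Complex.add_re, Complex.sub_re]
  ring

section relEntropy

open InformationTheory

variable {n : ℕ} {P Q : Matrix (Fin n) (Fin n) ℂ}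

lemma relEntropy_eq_sum_klFun (hP : P.PosDef) (hQ : Q.PosDef) :
    relEntropy P Q = ∑ i, ∑ j,
      ‖(star (hP.1.eigenvectorUnitary : Matrix (Fin n) (Fin n) ℂ) *
          hQ.1.eigenvectorUnitary) i j‖ ^ 2 *
        (hQ.1.eigenvalues j * klFun (hP.1.eigenvalues i / hQ.1.eigenvalues j)) := by
  -- every term in the form `f(P) * g(Q)`, so that `trace_cfc_mul_cfc` applies
  have hsplit : P * (matLog P - matLog Q) + Q - P =
      cfc (fun x : ℝ => x * Real.log x) P * cfc (fun _ : ℝ => (1 : ℝ)) Q -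
          cfc (id : ℝ → ℝ) P * cfc Real.log Q +
        cfc (fun _ : ℝ => (1 : ℝ)) P * cfc (id : ℝ → ℝ) Q -
          cfc (id : ℝ → ℝ) P * cfc (fun _ : ℝ => (1 : ℝ)) Q := by
    have hPsa : IsSelfAdjoint P := hP.1.isSelfAdjoint
    have hQsa : IsSelfAdjoint Q := hQ.1.isSelfAdjoint
    rw [cfc_mul (fun x => x) Real.log P (hg := P.finite_real_spectrum.continuousOn _), cfc_id' ℝ P,
      cfc_id ℝ P, cfc_id ℝ Q, cfc_const_one ℝ P, cfc_const_one ℝ Q, mul_one, one_mul, mul_one,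
      mul_sub, matLog, matLog]
  rw [relEntropy, hsplit, trace_sub, trace_add, trace_sub]
  simp only [hP.1.trace_cfc_mul_cfc hQ.1, Complex.sub_re, Complex.add_re, Complex.re_sum,
    ← Finset.sum_sub_distrib, ← Finset.sum_add_distrib]
  refine Finset.sum_congr rfl fun i _ => Finset.sum_congr rfl fun j _ => ?_
  rw [← mul_log_sub_mul_log_add_sub_eq_mul_klFun (hP.eigenvalues_pos i) (hQ.eigenvalues_pos j)]
  simp only [← RCLike.re_to_complex, RCLike.ofReal_re, id]
  ring

lemma relEntropy_nonneg (hP : P.PosDef) (hQ : Q.PosDef) : 0 ≤ relEntropy P Q := by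
  rw [relEntropy_eq_sum_klFun hP hQ]
  exact Finset.sum_nonneg fun i _ => Finset.sum_nonneg fun j _ =>
    mul_nonneg (sq_nonneg _)
      (mul_klFun_div_nonneg (hP.eigenvalues_pos i).le (hQ.eigenvalues_pos j))

lemma eq_of_relEntropy_eq_zero (hP : P.PosDef) (hQ : Q.PosDef) (h : relEntropy P Q = 0) :
    P = Q := by
  refine hP.1.eq_of_eigenvalues_eq_of_overlap_ne_zero hQ.1 fun i j hij => ?_
  have hterm_nonneg : ∀ i j,
      0 ≤ ‖(star (hP.1.eigenvectorUnitary : Matrix (Fin n) (Fin n) ℂ) *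
          hQ.1.eigenvectorUnitary) i j‖ ^ 2 *
        (hQ.1.eigenvalues j * klFun (hP.1.eigenvalues i / hQ.1.eigenvalues j)) := fun i j =>
    mul_nonneg (sq_nonneg _)
      (mul_klFun_div_nonneg (hP.eigenvalues_pos i).le (hQ.eigenvalues_pos j))
  rw [relEntropy_eq_sum_klFun hP hQ,
    Finset.sum_eq_zero_iff_of_nonneg fun i _ => Finset.sum_nonneg fun j _ => hterm_nonneg i j]
    at h
  have hterm := (Finset.sum_eq_zero_iff_of_nonneg fun j _ => hterm_nonneg i j).mp
    (h i (Finset.mem_univ i)) j (Finset.mem_univ j)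
  rw [mul_eq_zero, or_iff_right (pow_ne_zero 2 (norm_ne_zero_iff.mpr hij)),
    mul_klFun_div_eq_zero_iff (hP.eigenvalues_pos i).le (hQ.eigenvalues_pos j)] at hterm
  exact hterm

end relEntropy

lemma sum_mul_relEntropy_eq_add {ι : Type*} [Fintype ι] {n : ℕ}
    (A : ι → Matrix (Fin n) (Fin n) ℂ) (w : ι → ℝ) (hw : ∑ j, w j = 1)
    (X : Matrix (Fin n) (Fin n) ℂ) :
    ∑ j, w j * relEntropy (A j) X =
      ∑ j, w j * relEntropy (A j) (∑ k, w k • A k) + relEntropy (∑ k, w k • A k) X := by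
  set Abar := ∑ k, w k • A k
  set L := matLog Abar - matLog X
  have hlin : ∑ j, w j * ((A j * L).trace).re = ((Abar * L).trace).re := by
    simp only [Abar, Finset.sum_mul, smul_mul_assoc, trace_sum, trace_smul, Complex.re_sum,
      Complex.real_smul, Complex.re_ofReal_mul]
  rw [← sub_eq_iff_eq_add', ← Finset.sum_sub_distrib]
  calc ∑ j, (w j * relEntropy (A j) X - w j * relEntropy (A j) Abar)
      = ∑ j, w j * (((A j * L).trace).re + (X.trace.re - Abar.trace.re)) := by
        simp only [← mul_sub, relEntropy_sub_relEntropy, add_sub_assoc, L]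
    _ = ((Abar * L).trace).re + (X.trace.re - Abar.trace.re) := by
        rw [← hlin]
        simp only [mul_add, Finset.sum_add_distrib, ← Finset.sum_mul, hw, one_mul]
    _ = relEntropy Abar X := by
        rw [← add_sub_assoc, ← relEntropy_sub_relEntropy, relEntropy_self, sub_zero]

theorem commutative_entropy_barycenter_general {n m : ℕ}
    (A : Fin m → Matrix (Fin n) (Fin n) ℂ) (hA : ∀ j, (A j).PosDef)
    (hAcomm : ∀ j k, Commute (A j) (A k))
    (w : Fin m → ℝ) (hw : ∀ j, 0 < w j) (hw1 : ∑ j, w j = 1)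
    (X₀ : Matrix (Fin n) (Fin n) ℂ) (hX₀ : X₀.PosDef) :
    (∀ X : Matrix (Fin n) (Fin n) ℂ, X.PosDef → (∀ j, Commute (A j) X) →
        ∑ j, w j * ((A j * (matLog (A j) - matLog X₀) + X₀ - A j).trace).re ≤
          ∑ j, w j * ((A j * (matLog (A j) - matLog X) + X - A j).trace).re) ↔
      X₀ = ∑ j, w j • A j := by
  have hm : (Finset.univ : Finset (Fin m)).Nonempty :=
    Finset.nonempty_of_sum_ne_zero (by rw [hw1]; exact one_ne_zero)
  have hbar : (∑ j, w j • A j).PosDef := posDef_sum hm fun j _ => (hA j).smul (hw j)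
  have hbarA : ∀ j, Commute (A j) (∑ k, w k • A k) := fun j =>
    Commute.sum_right _ _ _ fun k _ => (hAcomm j k).smul_right (w k)
  change (∀ X : Matrix (Fin n) (Fin n) ℂ, X.PosDef → (∀ j, Commute (A j) X) →
      ∑ j, w j * relEntropy (A j) X₀ ≤ ∑ j, w j * relEntropy (A j) X) ↔ _
  constructor
  · intro hmin
    have hle := hmin _ hbar hbarA
    rw [sum_mul_relEntropy_eq_add A w hw1 X₀] at hle
    exact (eq_of_relEntropy_eq_zero hbar hX₀
      (le_antisymm (by linarith) (relEntropy_nonneg hbar hX₀))).symm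
  · rintro rfl X hX -
    rw [sum_mul_relEntropy_eq_add A w hw1 X]
    linarith [relEntropy_nonneg hbar hX]

/-- For pairwise commuting positive definite `A₁, …, A_m` and positive
weights summing to `1`, a positive definite `X₀` commuting with all `A_j` minimizes the
weighted sum of relative entropies `X ↦ Σ_j w_j Tr(A_j(log A_j − log X) + X − A_j)` over
positive definite matrices commuting with all `A_j` if and only if `X₀ = Σ_j w_j A_j`, the
weighted arithmetic mean. -/
theorem commutative_entropy_barycenter {n m : ℕ}
    (A : Fin m → Matrix (Fin n) (Fin n) ℂ) (hA : ∀ j, (A j).PosDef)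
    (hAcomm : ∀ j k, Commute (A j) (A k))
    (w : Fin m → ℝ) (hw : ∀ j, 0 < w j) (hw1 : ∑ j, w j = 1)
    (X₀ : Matrix (Fin n) (Fin n) ℂ) (hX₀ : X₀.PosDef) (hX₀A : ∀ j, Commute (A j) X₀) :
    (∀ X : Matrix (Fin n) (Fin n) ℂ, X.PosDef → (∀ j, Commute (A j) X) →
        ∑ j, w j * ((A j * (matLog (A j) - matLog X₀) + X₀ - A j).trace).re ≤
          ∑ j, w j * ((A j * (matLog (A j) - matLog X) + X - A j).trace).re) ↔
      X₀ = ∑ j, w j • A j :=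
  commutative_entropy_barycenter_general A hA hAcomm w hw hw1 X₀ hX₀
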